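/- Let α = Nσ² and m = (α - √(α² + 4))/(4σ²). Then u(x) = exp(m(|x|² + 1)) is a C² solution of -Δu(x) + (1/σ⁴)|x|²u(x) = -(2α/σ²) u(x) ln u(x) on ℝ^N. -/

import Mathlib

/-! For `u = exp (m (‖x‖² + 1))` one has `Δu = (4m²‖x‖² + 2mN) u` and `log u = m (‖x‖² + 1)`, so the
equation reduces to `1/σ⁴ = 4m² - 2Nm`, i.e. to `t = 2σ²m` solving `t² - αt - 1 = 0`; the given `m`
corresponds to the negative root `t = (α - √(α² + 4))/2`. -/

noncomputable def laplacian {N : ℕ} (f : EuclideanSpace ℝ (Fin N) → ℝ)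
    (x : EuclideanSpace ℝ (Fin N)) : ℝ :=
  ∑ i : Fin N, fderiv ℝ (fun y => fderiv ℝ f y (EuclideanSpace.single i 1)) x
      (EuclideanSpace.single i 1)

open Real

theorem sq_sub_mul_eq_one_of_eq_sub_sqrt {a t : ℝ} (ht : t = (a - √(a ^ 2 + 4)) / 2) :
    t ^ 2 - a * t = 1 := by
  have hs : √(a ^ 2 + 4) ^ 2 = a ^ 2 + 4 := sq_sqrt (by positivity)
  rw [show √(a ^ 2 + 4) = a - 2 * t by rw [ht]; ring] at hs
  linear_combination hs / 4

section Gaussian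

variable {N : ℕ} (m c : ℝ)

theorem hasFDerivAt_exp_mul_norm_sq_add (x : EuclideanSpace ℝ (Fin N)) :
    HasFDerivAt (fun y => exp (m * (‖y‖ ^ 2 + c)))
      ((2 * m * exp (m * (‖x‖ ^ 2 + c))) • innerSL ℝ x) x :=
  (((hasStrictFDerivAt_norm_sq x).hasFDerivAt.add_const c).const_mul m).exp.congr_fderiv
    (by ext y; simp; ring)

theorem fderiv_exp_mul_norm_sq_add_apply_single (y : EuclideanSpace ℝ (Fin N)) (i : Fin N) :
    fderiv ℝ (fun y => exp (m * (‖y‖ ^ 2 + c))) y (EuclideanSpace.single i 1)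
      = 2 * m * exp (m * (‖y‖ ^ 2 + c)) * y i := by
  simp [(hasFDerivAt_exp_mul_norm_sq_add m c y).fderiv, EuclideanSpace.inner_single_right]

theorem laplacian_exp_mul_norm_sq_add (x : EuclideanSpace ℝ (Fin N)) :
    laplacian (fun y => exp (m * (‖y‖ ^ 2 + c))) x
      = (4 * m ^ 2 * ‖x‖ ^ 2 + 2 * m * N) * exp (m * (‖x‖ ^ 2 + c)) := by
  have hpartial (i : Fin N) :
      fderiv ℝ (fun y => fderiv ℝ (fun y => exp (m * (‖y‖ ^ 2 + c))) y
          (EuclideanSpace.single i 1)) x (EuclideanSpace.single i 1)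
        = (4 * m ^ 2 * x i ^ 2 + 2 * m) * exp (m * (‖x‖ ^ 2 + c)) := by
    simp_rw [fderiv_exp_mul_norm_sq_add_apply_single]
    have h : HasFDerivAt (fun y => 2 * m * exp (m * (‖y‖ ^ 2 + c)) * y i) _ x :=
      ((hasFDerivAt_exp_mul_norm_sq_add m c x).const_mul (2 * m)).mul
        (EuclideanSpace.proj i : EuclideanSpace ℝ (Fin N) →L[ℝ] ℝ).hasFDerivAt
    rw [h.fderiv]
    simp [EuclideanSpace.inner_single_right]
    ring
  rw [laplacian, Finset.sum_congr rfl fun i _ => hpartial i, ← Finset.sum_mul,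
    Finset.sum_add_distrib, ← Finset.mul_sum, ← EuclideanSpace.real_norm_sq_eq]
  simp only [Finset.sum_const, Finset.card_univ, Fintype.card_fin, nsmul_eq_mul]
  ring

theorem contDiff_exp_mul_norm_sq_add {n : WithTop ℕ∞} :
    ContDiff ℝ n fun y : EuclideanSpace ℝ (Fin N) => exp (m * (‖y‖ ^ 2 + c)) :=
  contDiff_exp.comp (contDiff_const.mul (contDiff_norm_sq ℝ |>.add contDiff_const))

end Gaussian

theorem stmt6_general (N : ℕ) (σ α m : ℝ) (hσ : 0 < σ)
    (hα : α = N * σ ^ 2)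
    (hm : m = (α - Real.sqrt (α ^ 2 + 4)) / (4 * σ ^ 2))
    (u : EuclideanSpace ℝ (Fin N) → ℝ)
    (hu : ∀ x, u x = Real.exp (m * (‖x‖ ^ 2 + 1))) :
    ContDiff ℝ 2 u ∧
      ∀ x, -laplacian u x + (1 / σ ^ 4) * ‖x‖ ^ 2 * u x
          = -(2 * α / σ ^ 2) * u x * Real.log (u x) := by
  obtain rfl : u = fun y => exp (m * (‖y‖ ^ 2 + 1)) := funext hu
  refine ⟨contDiff_exp_mul_norm_sq_add m 1, fun x => ?_⟩
  have hσ2 : σ ^ 2 ≠ 0 := pow_ne_zero 2 hσ.ne'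
  have hroot : (2 * σ ^ 2 * m) ^ 2 - α * (2 * σ ^ 2 * m) = 1 :=
    sq_sub_mul_eq_one_of_eq_sub_sqrt (by rw [hm]; field_simp; ring)
  have hpotential : 1 / σ ^ 4 = 4 * m ^ 2 - 2 * N * m := by
    rw [hα] at hroot
    field_simp
    linear_combination -hroot
  have hlogCoeff : 2 * α / σ ^ 2 = 2 * N := by rw [hα]; field_simp
  rw [laplacian_exp_mul_norm_sq_add, log_exp, hpotential, hlogCoeff]
  ring

theorem stmt6 (N : ℕ) (hN : 1 ≤ N) (σ α m : ℝ) (hσ : 0 < σ)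
    (hα : α = N * σ ^ 2)
    (hm : m = (α - Real.sqrt (α ^ 2 + 4)) / (4 * σ ^ 2))
    (u : EuclideanSpace ℝ (Fin N) → ℝ)
    (hu : ∀ x, u x = Real.exp (m * (‖x‖ ^ 2 + 1))) :
    ContDiff ℝ 2 u ∧
      ∀ x, -laplacian u x + (1 / σ ^ 4) * ‖x‖ ^ 2 * u x
          = -(2 * α / σ ^ 2) * u x * Real.log (u x) :=
  stmt6_general N σ α m hσ hα hm u hu
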